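/- Let n < m. The wrinkled-embedding model Z(n,m) : ℝⁿ → ℝᵐ, given by Z(y,z) = (y, z³ + 3(|y|² − 1)z, ∫₀ᶻ (s² + |y|² − 1)² ds, 0, …, 0), is injective on all of ℝⁿ. -/
import Mathlib

open intervalIntegral MeasureTheory

/-- The wrinkled-embedding model `Z(n,m) : ℝⁿ → ℝᵐ`,
`Z(y,z) = (y, z³ + 3(|y|² − 1)z, ∫₀ᶻ (s² + |y|² − 1)² ds, 0, …, 0)`,
where `ℝⁿ = ℝ^{n−1} × ℝ` (so `k = n−1`) and the `m − n − 1` trailing zeros are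
collected in a Euclidean factor (so `l = m − n − 1`). -/
noncomputable def Zmap (k l : ℕ) (p : EuclideanSpace ℝ (Fin k) × ℝ) :
    EuclideanSpace ℝ (Fin k) × ℝ × ℝ × EuclideanSpace ℝ (Fin l) :=
  (p.1, p.2^3 + 3*(‖p.1‖^2 - 1)*p.2,
    ∫ s in (0:ℝ)..p.2, (s^2 + ‖p.1‖^2 - 1)^2, 0)

lemma F_hasDerivAt (c z : ℝ) :
    HasDerivAt (fun z => ∫ s in (0:ℝ)..z, (s^2 + c)^2) ((z^2+c)^2) z := by
  have hc : Continuous fun s : ℝ => (s^2 + c)^2 := by continuity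
  exact intervalIntegral.integral_hasDerivAt_right
    (hc.intervalIntegrable _ _)
    (hc.aestronglyMeasurable.stronglyMeasurableAtFilter)
    hc.continuousAt

lemma F_injective (c : ℝ) :
    Function.Injective (fun z => ∫ s in (0:ℝ)..z, (s^2 + c)^2) := by
  set F := fun z => ∫ s in (0:ℝ)..z, (s^2 + c)^2 with hF
  have hd : ∀ z, HasDerivAt F ((z^2+c)^2) z := F_hasDerivAt c
  have hmono : Monotone F := by
    apply monotone_of_deriv_nonneg (fun z => (hd z).differentiableAt)
    intro z
    rw [(hd z).deriv]
    positivity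
  -- key: if a < b and F a = F b then contradiction
  have key : ∀ a b : ℝ, a < b → F a = F b → False := by
    intro a b hab heq
    have hzero : ∀ x ∈ Set.Ioo a b, x^2 + c = 0 := by
      intro x hx
      have hev : F =ᶠ[nhds x] fun _ => F a := by
        filter_upwards [Ioo_mem_nhds hx.1 hx.2] with y hy
        exact le_antisymm (heq ▸ hmono hy.2.le) (hmono hy.1.le)
      have : deriv F x = 0 := by
        rw [hev.deriv_eq]; exact deriv_const _ _
      rw [(hd x).deriv] at this
      exact pow_eq_zero_iff (two_ne_zero) |>.mp this
    have h1 := hzero (a + (b-a)/4) ⟨by linarith, by linarith⟩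
    have h2 := hzero (a + (b-a)/2) ⟨by linarith, by linarith⟩
    have h3 := hzero (a + 3*(b-a)/4) ⟨by linarith, by linarith⟩
    nlinarith [sq_nonneg (b - a)]
  intro a b h
  rcases lt_trichotomy a b with h' | h' | h'
  · exact absurd h (by intro hh; exact key a b h' hh)
  · exact h'
  · exact absurd h (by intro hh; exact key b a h' hh.symm)

/-- For `n < m`, the wrinkled-embedding model `Z(n,m) : ℝⁿ → ℝᵐ`
is injective on all of `ℝⁿ`. -/
theorem Zmap_injective (n m : ℕ) (hn : 1 ≤ n) (hnm : n < m) :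
    Function.Injective (Zmap (n - 1) (m - n - 1)) := by
  rintro ⟨y1, z1⟩ ⟨y2, z2⟩ h
  simp only [Zmap, Prod.mk.injEq] at h
  obtain ⟨hy, -, hint, -⟩ := h
  subst hy
  have hz : z1 = z2 := by
    apply F_injective (‖y1‖^2 - 1)
    simpa [add_sub_assoc] using hint
  simp [hz]
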